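/- Let H be a free abelian group with basis x₁,...,x_{2g} (g ≥ 1), embed Λ²H into H⊗H by a∧b ↦ a⊗b − b⊗a, and hence H⊗Λ²H into H^{⊗3}. Let ω = Σ_{i=1}^g x_{2i-1}∧x_{2i}. Then the subgroup of H^{⊗3} consisting of elements a⊗ω for a ∈ H intersects trivially the subgroup Λ³H of H^{⊗3} spanned by all alternating sums Σ_{σ∈S₃} sgn(σ) a_{σ(1)}⊗a_{σ(2)}⊗a_{σ(3)}. -/

import Mathlib

/-!
Pairing with `f ⊗ f ⊗ h` kills every element of `Λ³M ⊂ M^{⊗3}`: on a full antisymmetrisation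
it gives a `3 × 3` determinant with two equal columns. On `a ⊗ ω` the same pairing gives
`f a · (f ⊗ h) ω`, and for `f = x_j^*` there is a partner `h = x_l^*` with `(f ⊗ h) ω = ±1`.
Hence every coordinate of `a` vanishes when `a ⊗ ω ∈ Λ³H`.
-/

open TensorProduct Module

section Alternating

variable {R M : Type*} [CommRing R] [AddCommGroup M] [Module R M]

def antisymmetrization (a : Fin 3 → M) : M ⊗[R] (M ⊗[R] M) :=
  ∑ σ : Equiv.Perm (Fin 3), (Equiv.Perm.sign σ : ℤ) • (a (σ 0) ⊗ₜ[R] (a (σ 1) ⊗ₜ[R] a (σ 2)))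

variable (R M) in
/-- The image of `Λ³M` in `M ⊗ (M ⊗ M)`. -/
def alternatingCube : Submodule R (M ⊗[R] (M ⊗[R] M)) :=
  Submodule.span R {t | ∃ a : Fin 3 → M, t = antisymmetrization a}

noncomputable def dualDistrib₃ (f g h : Dual R M) : Dual R (M ⊗[R] (M ⊗[R] M)) :=
  dualDistrib R M (M ⊗[R] M) (f ⊗ₜ dualDistrib R M M (g ⊗ₜ h))

lemma dualDistrib₃_tmul (f g h : Dual R M) (a : M) (t : M ⊗[R] M) :
    dualDistrib₃ f g h (a ⊗ₜ t) = f a * dualDistrib R M M (g ⊗ₜ h) t :=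
  dualDistrib_apply _ _ _ _

lemma dualDistrib₃_tmul_tmul (f g h : Dual R M) (a b c : M) :
    dualDistrib₃ f g h (a ⊗ₜ (b ⊗ₜ c)) = f a * (g b * h c) := by
  rw [dualDistrib₃_tmul, dualDistrib_apply]

lemma dualDistrib₃_antisymmetrization (f g h : Dual R M) (a : Fin 3 → M) :
    dualDistrib₃ f g h (antisymmetrization a) =
      (Matrix.of fun k i => ![f, g, h] i (a k)).det := by
  simp only [antisymmetrization, map_sum, map_zsmul, dualDistrib₃_tmul_tmul, Matrix.det_apply,
    Fin.prod_univ_three, Matrix.of_apply, Matrix.cons_val_zero, Matrix.cons_val_one,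
    Matrix.cons_val_two, Matrix.tail_cons, Matrix.head_cons, Units.smul_def, mul_assoc]

lemma dualDistrib₃_self_antisymmetrization (f h : Dual R M) (a : Fin 3 → M) :
    dualDistrib₃ f f h (antisymmetrization a) = 0 := by
  rw [dualDistrib₃_antisymmetrization]
  exact Matrix.det_zero_of_column_eq (i := 0) (j := 1) (by decide) fun _ => rfl

lemma alternatingCube_le_ker_dualDistrib₃ (f h : Dual R M) :
    alternatingCube R M ≤ LinearMap.ker (dualDistrib₃ f f h) := by
  rw [alternatingCube, Submodule.span_le]
  rintro _ ⟨a, rfl⟩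
  exact dualDistrib₃_self_antisymmetrization f h a

lemma mul_dualDistrib_eq_zero_of_tmul_mem_alternatingCube (f h : Dual R M) {a : M}
    {ω : M ⊗[R] M} (hmem : a ⊗ₜ ω ∈ alternatingCube R M) :
    f a * dualDistrib R M M (f ⊗ₜ h) ω = 0 := by
  rw [← dualDistrib₃_tmul]
  exact alternatingCube_le_ker_dualDistrib₃ f h hmem

end Alternating

section Symplectic

variable {R : Type*} [CommRing R]

lemma Fin.two_mul_val_lt {g : ℕ} (i : Fin g) : 2 * (i : ℕ) < 2 * g := by omega

lemma Fin.two_mul_val_add_one_lt {g : ℕ} (i : Fin g) : 2 * (i : ℕ) + 1 < 2 * g := by omega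

def Fin.twoMul {g : ℕ} (i : Fin g) : Fin (2 * g) := ⟨2 * i, Fin.two_mul_val_lt i⟩

def Fin.twoMulAddOne {g : ℕ} (i : Fin g) : Fin (2 * g) := ⟨2 * i + 1, Fin.two_mul_val_add_one_lt i⟩

lemma Fin.exists_eq_twoMul_or_eq_twoMulAddOne {g : ℕ} (j : Fin (2 * g)) :
    ∃ i : Fin g, j = i.twoMul ∨ j = i.twoMulAddOne := by
  obtain ⟨i, hj | hj⟩ := Nat.even_or_odd' j
  · exact ⟨⟨i, by omega⟩, .inl (Fin.ext hj)⟩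
  · exact ⟨⟨i, by omega⟩, .inr (Fin.ext hj)⟩

/-- `ω = Σᵢ x_{2i-1} ∧ x_{2i}`, indexed from `0`: `x_{2i-1}` and `x_{2i}` are
`Pi.single i.twoMul 1` and `Pi.single i.twoMulAddOne 1` for `i : Fin g`. -/
def symplecticTensor (R : Type*) [CommRing R] (g : ℕ) :
    (Fin (2 * g) → R) ⊗[R] (Fin (2 * g) → R) :=
  ∑ i : Fin g,
    ((Pi.single i.twoMul 1 : Fin (2 * g) → R) ⊗ₜ[R] (Pi.single i.twoMulAddOne 1) -
      (Pi.single i.twoMulAddOne 1 : Fin (2 * g) → R) ⊗ₜ[R] (Pi.single i.twoMul 1))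

lemma dualDistrib_proj_twoMul_symplecticTensor {g : ℕ} (i : Fin g) :
    dualDistrib R _ _ (LinearMap.proj i.twoMul ⊗ₜ LinearMap.proj i.twoMulAddOne)
      (symplecticTensor R g) = 1 := by
  simp [symplecticTensor, dualDistrib_apply, Pi.single_apply, Fin.twoMul, Fin.twoMulAddOne,
    Nat.two_mul_ne_two_mul_add_one, Nat.two_mul_ne_two_mul_add_one.symm, Fin.val_inj]

lemma dualDistrib_proj_twoMulAddOne_symplecticTensor {g : ℕ} (i : Fin g) :
    dualDistrib R _ _ (LinearMap.proj i.twoMulAddOne ⊗ₜ LinearMap.proj i.twoMul)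
      (symplecticTensor R g) = -1 := by
  simp [symplecticTensor, dualDistrib_apply, Pi.single_apply, Fin.twoMul, Fin.twoMulAddOne,
    Nat.two_mul_ne_two_mul_add_one, Nat.two_mul_ne_two_mul_add_one.symm, Fin.val_inj]

lemma eq_zero_of_tmul_symplecticTensor_mem_alternatingCube {g : ℕ} {a : Fin (2 * g) → R}
    (hmem : a ⊗ₜ symplecticTensor R g ∈ alternatingCube R (Fin (2 * g) → R)) : a = 0 := by
  funext j
  obtain ⟨i, rfl | rfl⟩ := Fin.exists_eq_twoMul_or_eq_twoMulAddOne j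
  · have h := mul_dualDistrib_eq_zero_of_tmul_mem_alternatingCube
      (LinearMap.proj i.twoMul) (LinearMap.proj i.twoMulAddOne) hmem
    rwa [dualDistrib_proj_twoMul_symplecticTensor, mul_one] at h
  · have h := mul_dualDistrib_eq_zero_of_tmul_mem_alternatingCube
      (LinearMap.proj i.twoMulAddOne) (LinearMap.proj i.twoMul) hmem
    rwa [dualDistrib_proj_twoMulAddOne_symplecticTensor, mul_neg_one, neg_eq_zero] at h

end Symplectic

/-- **The line `H ⊗ ω` meets `Λ³H` trivially inside `H^{⊗3}`.**
Let `H = ℤ^{2g}` with basis `x₁,…,x_{2g}`, embed `Λ²H` into `H ⊗ H` by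
`a∧b ↦ a⊗b − b⊗a`, and let `ω = Σᵢ x_{2i-1} ∧ x_{2i}` (as an element of `H ⊗ H`).
Then the only element of `H^{⊗3}` that is both of the form `a ⊗ ω` (for `a ∈ H`) and
lies in the span of all full antisymmetrisations
`Σ_{σ∈S₃} sgn(σ)·a_{σ(1)} ⊗ a_{σ(2)} ⊗ a_{σ(3)}` (the image of `Λ³H`) is `0`. -/
theorem statement17 (g : ℕ) :
    ∀ v : (Fin (2 * g) → ℤ) ⊗[ℤ] ((Fin (2 * g) → ℤ) ⊗[ℤ] (Fin (2 * g) → ℤ)),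
      (∃ a : Fin (2 * g) → ℤ,
        v = a ⊗ₜ[ℤ] (∑ i : Fin g,
          ((Pi.single (⟨2 * (i : ℕ), by omega⟩ : Fin (2 * g)) 1 : Fin (2 * g) → ℤ)
              ⊗ₜ[ℤ] (Pi.single (⟨2 * (i : ℕ) + 1, by omega⟩ : Fin (2 * g)) 1) -
            (Pi.single (⟨2 * (i : ℕ) + 1, by omega⟩ : Fin (2 * g)) 1 : Fin (2 * g) → ℤ)
              ⊗ₜ[ℤ] (Pi.single (⟨2 * (i : ℕ), by omega⟩ : Fin (2 * g)) 1)))) →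
      v ∈ Submodule.span ℤ
        {t : (Fin (2 * g) → ℤ) ⊗[ℤ] ((Fin (2 * g) → ℤ) ⊗[ℤ] (Fin (2 * g) → ℤ)) |
          ∃ a : Fin 3 → (Fin (2 * g) → ℤ),
            t = ∑ σ : Equiv.Perm (Fin 3),
              (Equiv.Perm.sign σ : ℤ) • (a (σ 0) ⊗ₜ[ℤ] (a (σ 1) ⊗ₜ[ℤ] a (σ 2)))} →
      v = 0 := by
  rintro v ⟨a, rfl⟩ hmem
  rw [eq_zero_of_tmul_symplecticTensor_mem_alternatingCube (g := g) hmem, zero_tmul]
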